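/- Define F_L(z,q) = ∑_{i,j≥0} q^{T_i+T_j} (-z^2)^j [L-j choose i]_q [i choose j]_q. Then for all L ≥ 2, F_L(z,q) = (1+q^L) F_{L-1}(z,q) - z^2 q^L F_{L-2}(z,q), with F_0(z,q)=1 and F_1(z,q)=1+q. -/
import Mathlib


/-- The q-Pochhammer symbol `(a;q)_n = ∏_{m=0}^{n-1} (1 - a q^m)`. -/
noncomputable def qPoch {K : Type*} [Field K] (a q : K) (n : ℕ) : K :=
  ∏ m ∈ Finset.range n, (1 - a * q ^ m)

/-- The Gaussian binomial coefficient `[m choose n]_q`, interpreted as `0`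
when `n < 0` or `m < n`. -/
noncomputable def qbinom {K : Type*} [Field K] (q : K) (m n : ℤ) : K :=
  if 0 ≤ n ∧ n ≤ m then
    qPoch q q m.toNat / (qPoch q q n.toNat * qPoch q q (m - n).toNat)
  else 0

/-- Triangular numbers `T n = n(n+1)/2`. -/
def T (n : ℕ) : ℕ := n * (n + 1) / 2

/-- The polynomial Lebesgue generating function `F_L(z,q)`. -/
noncomputable def FL {K : Type*} [Field K] (z q : K) (L : ℕ) : K :=
  ∑ i ∈ Finset.range (L + 1), ∑ j ∈ Finset.range (L + 1),
    q ^ (T i + T j) * (-z ^ 2) ^ j * qbinom q ((L : ℤ) - j) i * qbinom q (i : ℤ) (j : ℤ)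

section
variable {K : Type*} [Field K] (q : K)

noncomputable def B (m k : ℕ) : K :=
  if k ≤ m then qPoch q q m / (qPoch q q k * qPoch q q (m - k)) else 0

variable (hq : ∀ n : ℕ, 1 ≤ n → q ^ n ≠ 1)

include hq in
lemma one_sub_pow_ne (n : ℕ) (hn : 1 ≤ n) : (1 : K) - q ^ n ≠ 0 := by
  intro h
  exact hq n hn (sub_eq_zero.mp h).symm

lemma qPoch_succ (n : ℕ) : qPoch q q (n + 1) = qPoch q q n * (1 - q ^ (n + 1)) := by
  rw [qPoch, Finset.prod_range_succ, ← qPoch, pow_succ, mul_comm (q^n) q]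

lemma qPoch_zero : qPoch q q 0 = 1 := by simp [qPoch]

include hq in
lemma qPoch_ne (n : ℕ) : qPoch q q n ≠ 0 := by
  induction n with
  | zero => simp [qPoch]
  | succ n ih =>
    rw [qPoch_succ]
    exact mul_ne_zero ih (one_sub_pow_ne q hq (n+1) (by omega))

lemma qbinom_natCast (m k : ℕ) : qbinom q (m : ℤ) (k : ℤ) = B q m k := by
  unfold qbinom B
  by_cases h : k ≤ m
  · rw [if_pos ⟨Int.natCast_nonneg k, by exact_mod_cast h⟩, if_pos h]
    have e : ((m:ℤ) - (k:ℤ)).toNat = m - k := by omega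
    simp [e]
  · rw [if_neg (by push_cast; omega), if_neg h]

include hq in
lemma B_zero (m : ℕ) : B q m 0 = 1 := by
  rw [B, if_pos (Nat.zero_le m), Nat.sub_zero, qPoch_zero, one_mul,
    div_self (qPoch_ne q hq m)]

include hq in
lemma B_self (m : ℕ) : B q m m = 1 := by
  rw [B, if_pos le_rfl, Nat.sub_self, qPoch_zero, mul_one, div_self (qPoch_ne q hq m)]

lemma B_of_lt {m k : ℕ} (h : m < k) : B q m k = 0 := by
  rw [B, if_neg (by omega)]

include hq in
lemma pascal1 (n k : ℕ) :
    B q (n+1) (k+1) = B q n k + q ^ (k+1) * B q n (k+1) := by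
  by_cases hk : k ≤ n
  swap
  · rw [B_of_lt q (by omega), B_of_lt q (by omega), B_of_lt q (by omega)]; ring
  by_cases hk2 : k + 1 ≤ n
  · have e1 : n + 1 - (k + 1) = n - k := by omega
    have e2 : n - k = (n - k - 1) + 1 := by omega
    have e3 : n - (k+1) = n - k - 1 := by omega
    rw [B, B, B, if_pos (by omega), if_pos (by omega), if_pos (by omega), e1, e3,
      qPoch_succ, qPoch_succ q (k), e2, qPoch_succ q (n - k - 1), ← e2]
    have hpow : q ^ (n+1) = q ^ (k+1) * q ^ (n-k) := by
      rw [← pow_add]; congr 1; omega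
    have h1 := qPoch_ne q hq n
    have h2 := qPoch_ne q hq k
    have h3 := qPoch_ne q hq (n - k - 1)
    have h4 := one_sub_pow_ne q hq (k+1) (by omega)
    have h5 := one_sub_pow_ne q hq (n-k) (by omega)
    field_simp
    rw [hpow]
    ring
  · have : k = n := by omega
    subst this
    rw [B_self q hq, B_self q hq, B_of_lt q (by omega)]
    ring

include hq in
lemma pascal2 (n k : ℕ) :
    B q (n+1) (k+1) = B q n (k+1) + q ^ (n-k) * B q n k := by
  by_cases hk : k ≤ n
  swap
  · rw [B_of_lt q (by omega), B_of_lt q (by omega), B_of_lt q (by omega)]; ring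
  by_cases hk2 : k + 1 ≤ n
  · have e1 : n + 1 - (k + 1) = n - k := by omega
    have e2 : n - k = (n - k - 1) + 1 := by omega
    have e3 : n - (k+1) = n - k - 1 := by omega
    rw [B, B, B, if_pos (by omega), if_pos (by omega), if_pos (by omega), e1, e3,
      qPoch_succ, qPoch_succ q (k), e2, qPoch_succ q (n - k - 1), ← e2]
    have hpow : q ^ (n+1) = q ^ (n-k) * q ^ (k+1) := by
      rw [← pow_add]; congr 1; omega
    have h1 := qPoch_ne q hq n
    have h2 := qPoch_ne q hq k
    have h3 := qPoch_ne q hq (n - k - 1)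
    have h4 := one_sub_pow_ne q hq (k+1) (by omega)
    have h5 := one_sub_pow_ne q hq (n-k) (by omega)
    field_simp
    rw [hpow]
    ring
  · have : k = n := by omega
    subst this
    rw [B_self q hq, B_self q hq, B_of_lt q (by omega)]
    simp

include hq in
lemma tri (m k j : ℕ) : B q m (k + j) * B q (k + j) j = B q m j * B q (m - j) k := by
  by_cases h : k + j ≤ m
  · have hj : j ≤ m := by omega
    rw [B, B, B, B, if_pos h, if_pos (by omega), if_pos hj, if_pos (by omega)]
    have e1 : k + j - j = k := by omega
    have e2 : m - j - k = m - (k + j) := by omega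
    rw [e1, e2]
    have h1 := qPoch_ne q hq m
    have h2 := qPoch_ne q hq j
    have h3 := qPoch_ne q hq k
    have h4 := qPoch_ne q hq (k + j)
    have h5 := qPoch_ne q hq (m - (k+j))
    have h6 := qPoch_ne q hq (m - j)
    field_simp
  · rw [B_of_lt q (by omega)]
    by_cases hj : j ≤ m
    · rw [B_of_lt q (show m - j < k by omega)]; ring
    · rw [B_of_lt q (show m < j by omega)]; ring
end

lemma two_T (n : ℕ) : 2 * T n = n * (n + 1) :=
  Nat.mul_div_cancel' ((Nat.even_mul_succ_self n).two_dvd)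

lemma T_add (a b : ℕ) : T (a + b) = T a + T b + a * b := by
  have h := two_T (a+b); have ha := two_T a; have hb := two_T b
  nlinarith [h, ha, hb]

lemma T_succ (n : ℕ) : T (n+1) = T n + (n+1) := by
  nlinarith [two_T (n+1), two_T n]

section
variable {K : Type*} [Field K] (q : K)

/-- partial product `∏_{l<n} (1 + q^(a+l))`. -/
noncomputable def Q (a n : ℕ) : K := ∏ l ∈ Finset.range n, (1 + q ^ (a + l))

lemma Q_succ (a n : ℕ) : Q q a (n+1) = Q q a n * (1 + q ^ (a + n)) :=
  Finset.prod_range_succ _ _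

lemma Q_succ' (a n : ℕ) : Q q a (n+1) = (1 + q ^ a) * Q q (a+1) n := by
  rw [Q, Finset.prod_range_succ', Q]
  rw [mul_comm]
  congr 1
  apply Finset.prod_congr rfl
  intro l _
  have h : a + (l+1) = a+1+l := by omega
  rw [h]

noncomputable def R (n j : ℕ) : K :=
  ∑ k ∈ Finset.range (n+1), q ^ (T k + j * k) * B q n k

noncomputable def S (m j : ℕ) : K :=
  ∑ i ∈ Finset.range (m+1), q ^ (T i) * (B q m i * B q i j)

variable (hq : ∀ n : ℕ, 1 ≤ n → q ^ n ≠ 1)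

include hq in
lemma pascal_full (n k : ℕ) :
    B q (n+1) k = (if k = 0 then 0 else B q n (k-1)) + q ^ k * B q n k := by
  cases k with
  | zero => simp [B_zero q hq]
  | succ k => simpa using pascal1 q hq n k

include hq in
lemma R_succ (n j : ℕ) : R q (n+1) j = (1 + q ^ (j+1)) * R q n (j+1) := by
  rw [R]
  have step : ∀ k ∈ Finset.range (n+2),
      q ^ (T k + j * k) * B q (n+1) k =
        q ^ (T k + j * k) * (if k = 0 then 0 else B q n (k-1))
          + q ^ (T k + (j+1) * k) * B q n k := by
    intro k _
    rw [pascal_full q hq n k]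
    rw [mul_add]
    congr 1
    rw [← mul_assoc, ← pow_add]
    congr 2
    ring
  rw [Finset.sum_congr rfl step, Finset.sum_add_distrib]
  have first : ∑ k ∈ Finset.range (n+2),
      q ^ (T k + j * k) * (if k = 0 then 0 else B q n (k-1))
      = q ^ (j+1) * R q n (j+1) := by
    rw [Finset.sum_range_succ' (fun k => q ^ (T k + j * k) * (if k = 0 then 0 else B q n (k-1))) (n+1)]
    simp only [Nat.succ_ne_zero, if_false, if_true, ite_true, ite_false, reduceIte,
      Nat.add_sub_cancel, mul_zero, add_zero]
    rw [R, Finset.mul_sum]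
    apply Finset.sum_congr rfl
    intro k _
    rw [← mul_assoc, ← pow_add]
    congr 2
    rw [T_succ]
    ring
  have second : ∑ k ∈ Finset.range (n+2), q ^ (T k + (j+1) * k) * B q n k
      = R q n (j+1) := by
    rw [Finset.sum_range_succ, B_of_lt q (by omega), mul_zero, add_zero, R]
  rw [first, second]
  ring

lemma R_zero (j : ℕ) : R q 0 j = 1 := by
  simp [R, B, T, qPoch_zero]

include hq in
lemma R_closed (n : ℕ) : ∀ j, R q n j = Q q (j+1) n := by
  induction n with
  | zero => intro j; rw [R_zero, Q]; simp
  | succ n ih =>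
    intro j
    rw [R_succ q hq, ih (j+1), Q_succ']

end

section
variable {K : Type*} [Field K] (q : K) (hq : ∀ n : ℕ, 1 ≤ n → q ^ n ≠ 1)

include hq in
lemma S_closed (m j : ℕ) : S q m j = q ^ T j * B q m j * Q q (j+1) (m-j) := by
  by_cases hj : j ≤ m
  · rw [S, Finset.range_eq_Ico, ← Finset.sum_Ico_consecutive _ (Nat.zero_le j) (by omega)]
    have h1 : ∑ i ∈ Finset.Ico 0 j, q ^ T i * (B q m i * B q i j) = 0 := by
      apply Finset.sum_eq_zero
      intro i hi
      rw [Finset.mem_Ico] at hi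
      rw [B_of_lt q (show i < j by omega), mul_zero, mul_zero]
    rw [h1, zero_add, Finset.sum_Ico_eq_sum_range]
    have h2 : m + 1 - j = (m - j) + 1 := by omega
    rw [h2]
    have h3 : ∀ k ∈ Finset.range ((m-j)+1),
        q ^ T (j + k) * (B q m (j + k) * B q (j + k) j)
          = q ^ T j * B q m j * (q ^ (T k + j * k) * B q (m - j) k) := by
      intro k _
      have e : j + k = k + j := by omega
      rw [e, tri q hq m k j, T_add]
      rw [show T k + T j + k * j = T j + (T k + j * k) by ring, pow_add]
      ring
    rw [Finset.sum_congr rfl h3, ← Finset.mul_sum, ← R, R_closed q hq]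
  · rw [B_of_lt q (show m < j by omega), mul_zero, zero_mul, S]
    apply Finset.sum_eq_zero
    intro i hi
    rw [Finset.mem_range] at hi
    rw [B_of_lt q (show i < j by omega), mul_zero, mul_zero]

include hq in
lemma key (n k : ℕ) (hk : k + 1 ≤ n) :
    (1 + q^(n+1)) * B q (n+1) (k+1)
      = (1 + q^(n+1+(k+1))) * B q n (k+1) + q^(n-k) * (1+q^(k+1)) * B q n k := by
  have p1 := pascal1 q hq n k
  have p2 := pascal2 q hq n k
  have e : q^(n-k) * q^(k+1) = q^(n+1) := by rw [← pow_add]; congr 1; omega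
  linear_combination p2 + q^(n+1) * p1 - B q n k * e

include hq in
lemma S_rec (m j : ℕ) (hm : 1 ≤ m) (hj : 1 ≤ j) :
    S q m j = (1 + q ^ (m + j)) * S q (m-1) j + q ^ m * S q (m-1) (j-1) := by
  obtain ⟨n, rfl⟩ : ∃ n, m = n + 1 := ⟨m-1, by omega⟩
  obtain ⟨k, rfl⟩ : ∃ k, j = k + 1 := ⟨j-1, by omega⟩
  simp only [Nat.add_sub_cancel]
  rw [S_closed q hq, S_closed q hq, S_closed q hq]
  by_cases hlt : n < k
  · -- all binomials vanish
    rw [B_of_lt q (show n + 1 < k + 1 by omega), B_of_lt q (show n < k + 1 by omega),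
      B_of_lt q hlt]
    ring
  by_cases heq : n = k
  · subst heq
    rw [B_self q hq, B_self q hq, B_of_lt q (by omega)]
    simp only [Nat.sub_self, Nat.add_sub_cancel_left]
    rw [show Q q (n+1+1) 0 = (1:K) from by simp [Q],
      show Q q (n+1) 0 = (1:K) from by simp [Q], T_succ, pow_add]
    ring
  · have hk' : k + 1 ≤ n := by omega
    have e1 : n + 1 - (k+1) = (n - (k+1)) + 1 := by omega
    have e2 : n - k = (n - (k+1)) + 1 := by omega
    rw [e1, Q_succ, e2, Q_succ']
    have e3 : k + 1 + 1 + (n - (k+1)) = n + 1 := by omega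
    rw [e3]
    have e4 : q ^ (T (k+1)) * q ^ (n-k) = q ^ (T k) * q ^ (n+1) := by
      rw [← pow_add, ← pow_add]
      congr 1
      rw [T_succ]
      omega
    have hkey := key q hq n k hk'
    linear_combination (q^(T (k+1)) * Q q (k+1+1) (n-(k+1))) * hkey
      + (B q n k * (1+q^(k+1)) * Q q (k+1+1) (n-(k+1))) * e4
end
section
variable {K : Type*} [Field K] (q : K) (hq : ∀ n : ℕ, 1 ≤ n → q ^ n ≠ 1)

include hq in
lemma FL_eq (z : K) (L : ℕ) :
    FL z q L = ∑ j ∈ Finset.range (L+1), (-z^2)^j * q^(T j) * S q (L-j) j := by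
  rw [FL, Finset.sum_comm]
  apply Finset.sum_congr rfl
  intro j hj
  rw [Finset.mem_range] at hj
  have ecast : (L:ℤ) - (j:ℤ) = ((L - j : ℕ) : ℤ) := by omega
  have hterm : ∀ i ∈ Finset.range (L+1),
      q ^ (T i + T j) * (-z^2)^j * qbinom q ((L:ℤ) - j) i * qbinom q i j
        = (-z^2)^j * q^(T j) * (q^(T i) * (B q (L-j) i * B q i j)) := by
    intro i _
    rw [ecast, qbinom_natCast, qbinom_natCast, pow_add]
    ring
  rw [Finset.sum_congr rfl hterm, ← Finset.mul_sum, S]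
  congr 1
  apply (Finset.sum_subset (Finset.range_subset_range.mpr (by omega)) ?_).symm
  intro i hi his
  rw [Finset.mem_range] at hi
  simp only [Finset.mem_range] at his
  rw [B_of_lt q (show L - j < i by omega), zero_mul, mul_zero]

include hq in
lemma S_zero_left (j : ℕ) (hj : 1 ≤ j) : S q 0 j = 0 := by
  rw [S_closed q hq, B_of_lt q (by omega)]
  ring

include hq in
lemma S_col0 (m : ℕ) : S q m 0 = Q q 1 m := by
  rw [S_closed q hq, B_zero q hq, T]
  simp

include hq in
lemma FL_rec (z : K) (M : ℕ) :
    FL z q (M+2) = (1 + q^(M+2)) * FL z q (M+1) - z^2 * q^(M+2) * FL z q M := by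
  rw [FL_eq q hq, FL_eq q hq, FL_eq q hq]
  -- LHS: drop vanishing top term
  rw [Finset.sum_range_succ (fun j => (-z^2)^j * q^(T j) * S q (M+2-j) j) (M+2)]
  rw [show M + 2 - (M+2) = 0 by omega, S_zero_left q hq (M+2) (by omega), mul_zero, add_zero]
  -- second sum on RHS: reindex
  have h2 : z^2 * q^(M+2) * ∑ j ∈ Finset.range (M+1), (-z^2)^j * q^(T j) * S q (M-j) j
      = - ∑ j ∈ Finset.range (M+2),
          (if j = 0 then 0 else (-z^2)^j * q^(T (j-1)) * (q^(M+2) * S q (M+1-j) (j-1))) := by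
    rw [Finset.sum_range_succ'
      (fun j => if j = 0 then 0 else (-z^2)^j * q^(T (j-1)) * (q^(M+2) * S q (M+1-j) (j-1))) (M+1)]
    simp only [Nat.succ_ne_zero, if_false, ite_false, reduceIte, Nat.add_sub_cancel, add_zero,
      if_pos rfl, if_true, ite_true]
    rw [Finset.mul_sum, ← Finset.sum_neg_distrib]
    apply Finset.sum_congr rfl
    intro j _
    have e : M + 1 - (j+1) = M - j := by omega
    rw [e, pow_succ]
    ring
  rw [eq_sub_iff_add_eq, h2, ← sub_eq_add_neg, sub_eq_iff_eq_add, Finset.mul_sum,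
    ← Finset.sum_add_distrib]
  apply Finset.sum_congr rfl
  intro j hj
  rw [Finset.mem_range] at hj
  cases j with
  | zero =>
    simp only [if_pos rfl, if_true, ite_true, add_zero, pow_zero, one_mul, Nat.sub_zero]
    rw [S_col0 q hq, S_col0 q hq, Q_succ]
    have e : 1 + (M+1) = M + 2 := by omega
    rw [e]
    ring
  | succ k =>
    simp only [Nat.succ_ne_zero, if_false, ite_false, reduceIte, Nat.add_sub_cancel]
    have hk : k ≤ M := by omega
    have hS := S_rec q hq (M+1-k) (k+1) (by omega) (by omega)
    rw [show M + 1 - k - 1 = M - k by omega, Nat.add_sub_cancel,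
      show M + 1 - k + (k+1) = M + 2 by omega] at hS
    rw [show M + 2 - (k+1) = M + 1 - k by omega, show M + 1 - (k+1) = M - k by omega, hS]
    have e : q ^ (T (k+1)) * q ^ (M+1-k) = q ^ (T k) * q ^ (M+2) := by
      rw [← pow_add, ← pow_add]
      congr 1
      rw [T_succ]
      omega
    linear_combination ((-z^2)^(k+1) * S q (M-k) k) * e
end

theorem stmt11 {K : Type*} [Field K] (z q : K)
    (hq : ∀ n : ℕ, 1 ≤ n → q ^ n ≠ 1) :
    (∀ L : ℕ, 2 ≤ L →
        FL z q L = (1 + q ^ L) * FL z q (L - 1) - z ^ 2 * q ^ L * FL z q (L - 2)) ∧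
      FL z q 0 = 1 ∧ FL z q 1 = 1 + q := by
  refine ⟨?_, ?_, ?_⟩
  · intro L hL
    obtain ⟨M, rfl⟩ : ∃ M, L = M + 2 := ⟨L - 2, by omega⟩
    rw [show M + 2 - 1 = M + 1 by omega, show M + 2 - 2 = M by omega]
    exact FL_rec q hq z M
  · rw [FL_eq q hq, Finset.sum_range_one, S_col0 q hq]
    simp [Q, T]
  · rw [FL_eq q hq, Finset.sum_range_succ, Finset.sum_range_one,
      show (1:ℕ) - 1 = 0 by rfl, S_zero_left q hq 1 le_rfl, mul_zero, add_zero,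
      S_col0 q hq]
    simp [Q, T]
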